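/- Let π be a (d+1)-subset of [n], let F and G be two d-subsets of π with π = F ∪ {k} = G ∪ {ℓ}, k ≠ ℓ, and let ω be a function on oriented d-simplices satisfying the orientation compatibility ω(R_< ℓ) = −ω(R_< k) on the common ridge R = F ∩ G, together with ω(F_<) = (−1)^{d−ℓ} ω(R_< ℓ) and ω(G_<) = (−1)^{d−k+1} ω(R_< k) (where _< denotes increasing order and appending). Then ω(F_<)ε(F_< k) = ω(G_<)ε(G_< ℓ), i.e., the signature of the normal form of the oriented solid π is independent of the facet used to define it. -/
import Mathlib


/-- Well-definedness of the signature of the normal form of a known solid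
(Proposition 3.3(1)): with 1 ≤ ℓ < k ≤ d+1, if ω satisfies the orientation
compatibilities ω(R_<ℓ) = −ω(R_<k), ω(F_<) = (−1)^{d−ℓ} ω(R_<ℓ) and
ω(G_<) = (−1)^{d−k+1} ω(R_<k), then ω(F_<)ε(F_<k) = ω(G_<)ε(G_<ℓ), where
ε(F_<k) = (−1)^{d−k+1} and ε(G_<ℓ) = (−1)^{d−ℓ+1}. -/
theorem normal_form_sign_well_defined (d ℓ k : ℕ) (hℓ : 1 ≤ ℓ) (hℓk : ℓ < k)
    (hk : k ≤ d + 1) (ωF ωG ωRℓ ωRk : ℤ)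
    (hR : ωRℓ = -ωRk)
    (hF : ωF = (-1) ^ (d - ℓ) * ωRℓ)
    (hG : ωG = (-1) ^ (d + 1 - k) * ωRk) :
    ωF * (-1) ^ (d + 1 - k) = ωG * (-1) ^ (d + 1 - ℓ) := by
  have hℓd : ℓ ≤ d := Nat.lt_succ_iff.mp (hℓk.trans_le hk)
  have h1 : d + 1 - ℓ = (d - ℓ) + 1 := by omega
  subst hR hF hG
  rw [h1]
  ring
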